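/- For every N ≥ 1 and every x ∈ ℂ with |x| = 1, |Σ_{m=1}^N ε_m x^m| ≤ n(√n + 1)·N^{1/2} (the root-N property for the Fourier-matrix construction). -/

import Mathlib

open Polynomial Finset

/-- The vector of polynomials `(P_k^{(1)}, …, P_k^{(n)})` defined by
`P_0^{(j)}(x) = x` and `v_{k+1}(x) = A^{(n,k)}(x) v_k(x)`, where `A^{(n,k)}(x)` has
`(j,l)` entry `ω^{jl} x^{l·n^k}` with `ω = exp(2πi/n)` (indices `0`-based). -/
noncomputable def Fvec (n : ℕ) : ℕ → Fin n → Polynomial ℂ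
  | 0 => fun _ => Polynomial.X
  | k + 1 => fun j => ∑ l : Fin n,
      Polynomial.C (Complex.exp (2 * Real.pi * Complex.I / n) ^ ((j : ℕ) * (l : ℕ)))
        * Polynomial.X ^ ((l : ℕ) * n ^ k) * Fvec n k l

/-!
Write `ζ = exp(2πi/n)`. On the unit circle, `v_{k+1}(x)` is the discrete Fourier transform of
the vector `(x^{l n^k} P_k^{(l)}(x))_l`, so by Parseval `∑_j |P_k^{(j)}(x)|² = n^{k+1}` and each
`|P_k^{(j)}(x)| ≤ √n^{k+1}`. Since every `P_k^{(l)}` lives in degrees `1, …, n^k`, the coefficients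
of `P_{k+1}^{(j)}` are the `n` coefficient blocks of the `P_k^{(l)}`, twisted by `ζ^{jl}` and laid
side by side. A partial sum of `P_{k+1}^{(j)}` is therefore `q < n` complete blocks, each of size at
most `√n^{k+1}`, plus one partial sum of some `P_k^{(q)}`; by induction the partial sums of
`P_k^{(j)}` are at most `(n + √n) √n^k`. Taking `k` with `N ≤ n^k ≤ nN` gives the bound.
-/

open ComplexConjugate

theorem Nat.exists_fin_mul_add_of_le_mul {n d N : ℕ} (hn : n ≠ 0) (hN : N ≤ n * d) :
    ∃ (q : Fin n) (r : ℕ), r ≤ d ∧ N = q * d + r := by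
  rcases Nat.eq_zero_or_pos N with rfl | hN0
  · exact ⟨⟨0, Nat.pos_of_ne_zero hn⟩, 0, Nat.zero_le d, by simp⟩
  have hd : 0 < d := Nat.pos_of_mul_pos_left (hN0.trans_le hN)
  have hlo : (N - 1) / d * d ≤ N - 1 := Nat.div_mul_le_self _ _
  have hhi : N - 1 < (N - 1) / d * d + d := Nat.lt_div_mul_add hd
  have hq : (N - 1) / d < n := (Nat.div_lt_iff_lt_mul hd).mpr (by omega)
  exact ⟨⟨(N - 1) / d, hq⟩, N - (N - 1) / d * d, by omega,
    (by omega : N = (N - 1) / d * d + (N - (N - 1) / d * d))⟩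

namespace IsPrimitiveRoot

variable {n : ℕ} {ζ : ℂ}

theorem sum_pow_mul_conj_pow (hζ : IsPrimitiveRoot ζ n) (l l' : Fin n) :
    ∑ j : Fin n, ζ ^ ((j : ℕ) * l) * conj (ζ ^ ((j : ℕ) * l')) = if l = l' then (n : ℂ) else 0 := by
  have hn : n ≠ 0 := by rintro rfl; exact l.elim0
  have hζ0 : ζ ≠ 0 := hζ.ne_zero hn
  have hterm : ∀ j : Fin n, ζ ^ ((j : ℕ) * l) * conj (ζ ^ ((j : ℕ) * l')) =
      (ζ ^ (l : ℕ) / ζ ^ (l' : ℕ)) ^ (j : ℕ) := by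
    intro j
    rw [← Complex.inv_eq_conj (by rw [norm_pow, hζ.norm'_eq_one hn, one_pow]), div_pow,
      div_eq_mul_inv, ← pow_mul, ← pow_mul, mul_comm (j : ℕ), mul_comm (j : ℕ)]
  simp only [hterm]
  rw [Fin.sum_univ_eq_sum_range (fun j => (ζ ^ (l : ℕ) / ζ ^ (l' : ℕ)) ^ j)]
  split_ifs with h
  · simp [h, hζ0]
  · have hne : ζ ^ (l : ℕ) / ζ ^ (l' : ℕ) ≠ 1 := fun h1 =>
      h (Fin.ext (hζ.pow_inj l.isLt l'.isLt ((div_eq_one_iff_eq (pow_ne_zero _ hζ0)).mp h1)))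
    rw [geom_sum_eq hne, div_pow, ← pow_mul, ← pow_mul, mul_comm, pow_mul, hζ.pow_eq_one,
      mul_comm, pow_mul, hζ.pow_eq_one, one_pow, one_pow, div_one, sub_self, zero_div]

theorem sum_sq_norm_sum_pow_mul (hζ : IsPrimitiveRoot ζ n) (a : Fin n → ℂ) :
    ∑ j : Fin n, ‖∑ l : Fin n, ζ ^ ((j : ℕ) * l) * a l‖ ^ 2 = n * ∑ l : Fin n, ‖a l‖ ^ 2 := by
  apply Complex.ofReal_injective
  push_cast
  simp only [← Complex.mul_conj', map_sum, map_mul, Finset.sum_mul, Finset.mul_sum]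
  rw [Finset.sum_comm]
  refine Finset.sum_congr rfl fun l _ => ?_
  rw [Finset.sum_comm]
  simp_rw [mul_mul_mul_comm _ (a _), ← Finset.sum_mul, hζ.sum_pow_mul_conj_pow, ite_mul, zero_mul]
  rw [Finset.sum_ite_eq', if_pos (Finset.mem_univ l)]

end IsPrimitiveRoot

namespace Polynomial

section PartialSum

variable {R : Type*} [CommSemiring R]

def partialSum (p : R[X]) (N : ℕ) (x : R) : R :=
  ∑ m ∈ Ioc 0 N, p.coeff m * x ^ m

@[simp]
theorem partialSum_zero_right (p : R[X]) (x : R) : partialSum p 0 x = 0 := by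
  simp [partialSum]

theorem partialSum_sum {ι : Type*} (s : Finset ι) (p : ι → R[X]) (N : ℕ) (x : R) :
    partialSum (∑ i ∈ s, p i) N x = ∑ i ∈ s, partialSum (p i) N x := by
  simp only [partialSum, finsetSum_coeff, Finset.sum_mul]
  exact Finset.sum_comm

theorem partialSum_C_mul (a : R) (p : R[X]) (N : ℕ) (x : R) :
    partialSum (C a * p) N x = a * partialSum p N x := by
  simp only [partialSum, coeff_C_mul, Finset.mul_sum, mul_assoc]

theorem partialSum_X_pow_mul {p : R[X]} (hp : p.coeff 0 = 0) (e N : ℕ) (x : R) :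
    partialSum (X ^ e * p) N x = x ^ e * partialSum p (N - e) x := by
  have hshift : (Ioc 0 (N - e)).map (addRightEmbedding e) = Ioc e (N - e + e) := by
    rw [map_add_right_Ioc, zero_add]
  symm
  calc x ^ e * partialSum p (N - e) x
      = ∑ m ∈ Ioc e (N - e + e), (X ^ e * p).coeff m * x ^ m := by
        rw [partialSum, Finset.mul_sum, ← hshift, sum_map]
        refine Finset.sum_congr rfl fun m _ => ?_
        rw [addRightEmbedding_apply, coeff_X_pow_mul, pow_add]
        ring
    _ = partialSum (X ^ e * p) N x := by
        refine Finset.sum_subset (fun m hm => by simp only [mem_Ioc] at hm ⊢; omega) ?_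
        intro m hmN hme
        simp only [mem_Ioc] at hmN hme
        rw [coeff_X_pow_mul']
        split_ifs with h
        · rw [show m - e = 0 by omega, hp, zero_mul]
        · rw [zero_mul]

theorem partialSum_eq_eval {p : R[X]} (hp : p.coeff 0 = 0) {N : ℕ} (hN : p.natDegree ≤ N)
    (x : R) : partialSum p N x = p.eval x := by
  rw [eval_eq_sum_range' (Nat.lt_succ_of_le hN), partialSum,
    show range (N + 1) = insert 0 (Ioc 0 N) by ext m; simp,
    sum_insert (by simp), hp, zero_mul, zero_add]

end PartialSum

theorem partialSum_sum_C_mul_X_pow_mul {R : Type*} [CommSemiring R] {n d : ℕ} (c : Fin n → R)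
    {p : Fin n → R[X]} (hp : ∀ l, (p l).coeff 0 = 0)
    (hdeg : ∀ l, (p l).natDegree ≤ d) (q : Fin n) {r : ℕ} (hr : r ≤ d) (x : R) :
    partialSum (∑ l, C (c l) * X ^ ((l : ℕ) * d) * p l) (q * d + r) x =
      ∑ l ∈ Iio q, c l * x ^ ((l : ℕ) * d) * (p l).eval x +
        c q * x ^ ((q : ℕ) * d) * partialSum (p q) r x := by
  have hterm : ∀ l : Fin n, c l * (x ^ ((l : ℕ) * d) * partialSum (p l) (q * d + r - l * d) x) =
      (if l < q then c l * x ^ ((l : ℕ) * d) * (p l).eval x else 0) +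
        if l = q then c q * x ^ ((q : ℕ) * d) * partialSum (p q) r x else 0 := by
    intro l
    rcases lt_trichotomy l q with hlq | rfl | hql
    · have : ((l : ℕ) + 1) * d ≤ q * d := Nat.mul_le_mul_right d hlq
      rw [partialSum_eq_eval (hp l) ((hdeg l).trans (by rw [add_one_mul] at this; omega)),
        if_pos hlq, if_neg hlq.ne, add_zero, mul_assoc]
    · rw [if_neg (lt_irrefl l), if_pos rfl, zero_add, Nat.add_sub_cancel_left, mul_assoc]
    · have : ((q : ℕ) + 1) * d ≤ l * d := Nat.mul_le_mul_right d hql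
      rw [show (q : ℕ) * d + r - l * d = 0 by rw [add_one_mul] at this; omega,
        if_neg hql.not_gt, if_neg hql.ne', partialSum_zero_right, mul_zero, mul_zero, add_zero]
  simp only [partialSum_sum, mul_assoc, partialSum_C_mul, partialSum_X_pow_mul (hp _), hterm,
    Finset.sum_add_distrib, Finset.sum_ite_eq', Finset.mem_univ, if_true, ← Finset.sum_filter,
    filter_gt_eq_Iio]

theorem norm_partialSum_sum_C_mul_X_pow_mul_le {𝕜 : Type*} [NormedField 𝕜] {n d : ℕ}
    (c : Fin n → 𝕜) {p : Fin n → 𝕜[X]} (hp : ∀ l, (p l).coeff 0 = 0)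
    (hdeg : ∀ l, (p l).natDegree ≤ d)
    (hc : ∀ l, ‖c l‖ = 1) {x : 𝕜} (hx : ‖x‖ = 1) {A B : ℝ} (hA : ∀ l, ‖(p l).eval x‖ ≤ A)
    (hB : ∀ l, ∀ r ≤ d, ‖partialSum (p l) r x‖ ≤ B) (q : Fin n) {r : ℕ} (hr : r ≤ d) :
    ‖partialSum (∑ l, C (c l) * X ^ ((l : ℕ) * d) * p l) (q * d + r) x‖ ≤ q * A + B := by
  have hunit : ∀ l e, ‖c l * x ^ e‖ = 1 := fun l e => by
    rw [norm_mul, norm_pow, hc, hx, one_pow, one_mul]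
  rw [partialSum_sum_C_mul_X_pow_mul c hp hdeg q hr]
  refine (norm_add_le _ _).trans (add_le_add ?_ ?_)
  · refine (norm_sum_le _ _).trans ?_
    calc ∑ l ∈ Iio q, ‖c l * x ^ ((l : ℕ) * d) * (p l).eval x‖
        ≤ ∑ l ∈ Iio q, A :=
          Finset.sum_le_sum fun l _ => by rw [norm_mul, hunit, one_mul]; exact hA l
      _ = q * A := by rw [sum_const, Fin.card_Iio, nsmul_eq_mul]
  · rw [norm_mul, hunit, one_mul]
    exact hB q r hr

section Fvec

variable {n : ℕ}

theorem X_dvd_Fvec (k : ℕ) (j : Fin n) : X ∣ Fvec n k j := by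
  induction k generalizing j with
  | zero => exact dvd_rfl
  | succ k ih => exact dvd_sum fun l _ => dvd_mul_of_dvd_right (ih l) _

theorem coeff_Fvec_zero (k : ℕ) (j : Fin n) : (Fvec n k j).coeff 0 = 0 :=
  X_dvd_iff.mp (X_dvd_Fvec k j)

theorem natDegree_Fvec_le (k : ℕ) (j : Fin n) : (Fvec n k j).natDegree ≤ n ^ k := by
  induction k generalizing j with
  | zero => exact natDegree_X_le
  | succ k ih =>
    refine natDegree_sum_le_of_forall_le _ _ fun l _ => ?_
    have hl : ((l : ℕ) + 1) * n ^ k ≤ n ^ (k + 1) := by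
      rw [pow_succ']
      exact Nat.mul_le_mul_right _ l.isLt
    calc _ ≤ (l : ℕ) * n ^ k + n ^ k :=
          (natDegree_mul_le.trans (add_le_add (natDegree_C_mul_X_pow_le _ _) (ih l)))
      _ ≤ n ^ (k + 1) := by rwa [add_one_mul] at hl

theorem sum_sq_norm_eval_Fvec (hn : n ≠ 0) (k : ℕ) {x : ℂ} (hx : ‖x‖ = 1) :
    ∑ j : Fin n, ‖(Fvec n k j).eval x‖ ^ 2 = n ^ (k + 1) := by
  induction k with
  | zero => simp [Fvec, hx]
  | succ k ih =>
    have hζ := Complex.isPrimitiveRoot_exp n hn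
    simp only [Fvec, eval_finsetSum, eval_mul, eval_C, eval_pow, eval_X]
    -- so that `mul_assoc` cannot rewrite inside the argument of `exp`
    generalize Complex.exp (2 * Real.pi * Complex.I / n) = ζ at hζ ⊢
    simp only [mul_assoc, hζ.sum_sq_norm_sum_pow_mul]
    simp only [norm_mul, norm_pow, hx, one_pow, one_mul, ih, pow_succ' _ (k + 1)]

theorem norm_eval_Fvec_le (hn : n ≠ 0) (k : ℕ) (j : Fin n) {x : ℂ} (hx : ‖x‖ = 1) :
    ‖(Fvec n k j).eval x‖ ≤ √n ^ (k + 1) := by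
  refine (pow_le_pow_iff_left₀ (norm_nonneg _) (by positivity) two_ne_zero).mp ?_
  rw [← pow_mul, mul_comm, pow_mul, Real.sq_sqrt (Nat.cast_nonneg n),
    ← sum_sq_norm_eval_Fvec hn k hx]
  exact single_le_sum (f := fun j => ‖(Fvec n k j).eval x‖ ^ 2) (fun _ _ => by positivity)
    (mem_univ j)

theorem norm_partialSum_Fvec_le (hn : n ≠ 0) {x : ℂ} (hx : ‖x‖ = 1) (k : ℕ) (j : Fin n) {N : ℕ}
    (hN : N ≤ n ^ k) : ‖partialSum (Fvec n k j) N x‖ ≤ (n + √n) * √n ^ k := by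
  induction k generalizing j N with
  | zero =>
    have h1 : (1 : ℝ) ≤ n := Nat.one_le_cast.mpr (Nat.pos_of_ne_zero hn)
    rw [pow_zero] at hN
    interval_cases N <;> simp [partialSum, Fvec, hx] <;> linarith [Real.sqrt_nonneg n]
  | succ k ih =>
    obtain ⟨q, r, hr, rfl⟩ := Nat.exists_fin_mul_add_of_le_mul hn (hN.trans_eq (pow_succ' n k))
    have hζ := Complex.isPrimitiveRoot_exp n hn
    have hq : (q : ℝ) ≤ n - 1 := by
      have : (q : ℝ) + 1 ≤ n := by exact_mod_cast q.isLt
      linarith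
    have hsq : √n * √n = n := Real.mul_self_sqrt (Nat.cast_nonneg n)
    calc ‖partialSum (Fvec n (k + 1) j) (q * n ^ k + r) x‖
        ≤ q * √n ^ (k + 1) + (n + √n) * √n ^ k :=
          norm_partialSum_sum_C_mul_X_pow_mul_le _ (coeff_Fvec_zero k) (natDegree_Fvec_le k)
            (fun l => by rw [norm_pow, hζ.norm'_eq_one hn, one_pow]) hx
            (fun l => norm_eval_Fvec_le hn k l hx) (fun l r hr => ih l hr) q hr
      _ ≤ (n + √n) * √n ^ (k + 1) := by
        have : (q : ℝ) * √n ^ (k + 1) ≤ (n - 1) * √n ^ (k + 1) := by gcongr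
        rw [pow_succ] at this ⊢
        linear_combination this - √n ^ k * hsq

end Fvec

end Polynomial

/-- The root-N property for the Fourier-matrix construction: the sequence `ε` of
coefficients of the `P_k^{(1)}` (well defined, as `ε m` is the coefficient of `x^m`
in `P_k^{(1)}` for any `k` with `m ≤ n^k`) satisfies
`|∑_{m=1}^N ε_m x^m| ≤ n(√n + 1)·√N` for all `|x| = 1`. -/
theorem stmt19 (n : ℕ) (hn : 2 ≤ n) (ε : ℕ → ℂ)
    (hε : ∀ m k : ℕ, 1 ≤ m → m ≤ n ^ k → ε m = (Fvec n k ⟨0, by omega⟩).coeff m) :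
    ∀ N : ℕ, 1 ≤ N → ∀ x : ℂ, ‖x‖ = 1 →
      ‖∑ m ∈ Finset.Icc 1 N, ε m * x ^ m‖
        ≤ (n : ℝ) * (Real.sqrt n + 1) * Real.sqrt N := by
  intro N hN x hx
  obtain ⟨k, hNk, hkN⟩ : ∃ k, N ≤ n ^ k ∧ n ^ k ≤ n * N :=
    ⟨Nat.log n N + 1, (Nat.lt_pow_succ_log_self (by omega) N).le,
      by rw [pow_succ']; exact Nat.mul_le_mul_left n (Nat.pow_log_le_self n (by omega))⟩
  have hsum : ∑ m ∈ Icc 1 N, ε m * x ^ m = partialSum (Fvec n k ⟨0, by omega⟩) N x := by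
    rw [partialSum, ← Icc_add_one_left_eq_Ioc]
    exact sum_congr rfl fun m hm => by rw [hε m k (mem_Icc.mp hm).1 ((mem_Icc.mp hm).2.trans hNk)]
  have hpow : √n ^ k ≤ √n * √N := by
    refine (pow_le_pow_iff_left₀ (by positivity) (by positivity) two_ne_zero).mp ?_
    rw [← pow_mul, mul_comm, pow_mul, mul_pow, Real.sq_sqrt (Nat.cast_nonneg _),
      Real.sq_sqrt (Nat.cast_nonneg _)]
    exact_mod_cast hkN
  have hsq : √n * √n = n := Real.mul_self_sqrt (Nat.cast_nonneg n)
  rw [hsum]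
  calc _ ≤ (n + √n) * √n ^ k := norm_partialSum_Fvec_le (by omega) hx k _ hNk
    _ ≤ (n + √n) * (√n * √N) := by gcongr
    _ = n * (√n + 1) * √N := by linear_combination √N * hsq
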